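/- Let K be a field of characteristic 2 and let a, b ∈ ℤ with a ≡ b (mod 2). Then ⁅x_1^a, x_2^b⁆ ∈ T_ℤ(U_1). (The polynomials ⁅x_1^a, x_2^b⁆, with a and b of the same parity, are ℤ-graded identities of U_1.) -/

import Mathlib

/-!
A derivation `D ∈ (U_1)_a` is `c • t^(a+1) d/dt`, so for `D ∈ (U_1)_a` and `E ∈ (U_1)_b` one
computes `⁅D, E⁆ = (b - a) c d • t^(a+b+1) d/dt`. When `a ≡ b (mod 2)` the factor `b - a`
vanishes in characteristic two.
-/

open FreeLieAlgebra LaurentPolynomial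

/-- The free Lie algebra `L` over `K` on the generators `x_i^a`, `(a, i) : ℤ × ℕ`;
the generator `x_i^a := FreeLieAlgebra.of K (a, i)` has ℤ-degree `a`. -/
abbrev FL (K : Type*) [Field K] := FreeLieAlgebra K (ℤ × ℕ)

variable (K : Type*) [Field K]

/-- Iterated Lie brackets of generators whose ℤ-degrees sum to `a`. -/
inductive IsHomBracket : FL K → ℤ → Prop
  | gen (a : ℤ) (i : ℕ) : IsHomBracket (FreeLieAlgebra.of K (a, i)) a
  | bracket {u v : FL K} {a b : ℤ} :
      IsHomBracket u a → IsHomBracket v b → IsHomBracket ⁅u, v⁆ (a + b)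

/-- The homogeneous component `L_a` of the free Lie algebra. -/
noncomputable def homComp (a : ℤ) : Submodule K (FL K) :=
  Submodule.span K {w : FL K | IsHomBracket K w a}

/-- A graded endomorphism of the free Lie algebra. -/
def IsGradedEndo (φ : FL K →ₗ⁅K⁆ FL K) : Prop :=
  ∀ (a : ℤ) (i : ℕ), φ (FreeLieAlgebra.of K (a, i)) ∈ homComp K a

/-- A `T_ℤ`-ideal: a Lie ideal stable under all graded endomorphisms. -/
def IsTIdeal (I : LieIdeal K (FL K)) : Prop :=
  ∀ φ : FL K →ₗ⁅K⁆ FL K, IsGradedEndo K φ → ∀ x ∈ I, φ x ∈ I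

/-- `⟨S⟩_{T_ℤ}`, the smallest `T_ℤ`-ideal containing `S` (as a set of elements). -/
def TSpan (S : Set (FL K)) : Set (FL K) :=
  {x : FL K | ∀ I : LieIdeal K (FL K), IsTIdeal K I → S ⊆ (I : Set (FL K)) → x ∈ I}

/-- `U_1`, the Lie algebra of `K`-linear derivations of `K[t, t⁻¹]`. -/
abbrev U1 (K : Type*) [Field K] := Derivation K (LaurentPolynomial K) (LaurentPolynomial K)

/-- Evaluation of a derivation of `K[t,t⁻¹]` at `t`, as a linear map. -/
noncomputable def evalT : U1 K →ₗ[K] LaurentPolynomial K where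
  toFun D := D (T 1)
  map_add' D E := by simp
  map_smul' c D := by simp

/-- The homogeneous component `(U_1)_a = {D | D t ∈ K • t^{a+1}}` of the canonical
ℤ-grading of `U_1`. -/
noncomputable def U1comp (a : ℤ) : Submodule K (U1 K) :=
  (Submodule.span K ({T (a + 1)} : Set (LaurentPolynomial K))).comap (evalT K)

/-- `T_ℤ(U_1)`, the set of ℤ-graded identities of `U_1`. -/
def TU1 : Set (FL K) :=
  {f : FL K | ∀ v : ℤ × ℕ → U1 K, (∀ (a : ℤ) (i : ℕ), v (a, i) ∈ U1comp K a) →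
    FreeLieAlgebra.lift K v f = 0}

namespace LaurentPolynomial

variable {R : Type*} [CommRing R] {M : Type*} [AddCommGroup M] [Module R[T;T⁻¹] M] [Module R M]

theorem derivation_apply_T (D : Derivation R R[T;T⁻¹] M) (n : ℤ) :
    D (T n) = n • (T (n - 1) : R[T;T⁻¹]) • D (T 1) := by
  have natCase (m : ℕ) : D (T m) = (m : ℤ) • (T ((m : ℤ) - 1) : R[T;T⁻¹]) • D (T 1) := by
    rcases m with _ | m
    · simp [T_zero]
    · rw [← mul_one ((m + 1 : ℕ) : ℤ), ← T_pow, D.leibniz_pow, T_pow, mul_one, mul_one,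
        natCast_zsmul]
      push_cast
      rw [add_sub_cancel_right]
  obtain ⟨m, rfl | rfl⟩ := Int.eq_nat_or_neg n
  · exact natCase m
  · have inv : (T (-(m : ℤ)) : R[T;T⁻¹]) * T m = 1 := by rw [← T_add, neg_add_cancel, T_zero]
    rw [D.leibniz_of_mul_eq_one inv, natCase, smul_comm, T_pow, smul_smul, neg_mul, ← T_add,
      neg_smul, smul_neg, ← neg_smul]
    congr 3
    push_cast
    ring

theorem derivation_ext_T_one {D₁ D₂ : Derivation R R[T;T⁻¹] M} (h : D₁ (T 1) = D₂ (T 1)) :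
    D₁ = D₂ := by
  ext f
  induction f using LaurentPolynomial.induction_on' with
  | add p q hp hq => rw [map_add, map_add, hp, hq]
  | C_mul_T n r => rw [C_eq_algebraMap, ← Algebra.smul_def, D₁.map_smul, D₂.map_smul,
      derivation_apply_T D₁ n, derivation_apply_T D₂ n, h]

theorem derivation_lie_apply_T_one {D E : Derivation R R[T;T⁻¹] R[T;T⁻¹]} {a b : ℤ} {c d : R}
    (hD : D (T 1) = c • T (a + 1)) (hE : E (T 1) = d • T (b + 1)) :
    ⁅D, E⁆ (T 1) = (((b : R) - a) * c * d) • T (a + b + 1) := by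
  rw [Derivation.commutator_apply, hD, hE, D.map_smul, E.map_smul, derivation_apply_T D,
    derivation_apply_T E, hD, hE]
  have hT : (T (a + b + 1) : R[T;T⁻¹]) = T b * T (a + 1) := by rw [← T_add]; ring_nf
  have hT' : (T (a + b + 1) : R[T;T⁻¹]) = T a * T (b + 1) := by rw [← T_add]; ring_nf
  simp only [add_sub_cancel_right, Algebra.smul_def, eq_intCast, Algebra.algebraMap_self,
    RingHom.id_apply, map_mul, map_sub, map_intCast, Int.cast_add, Int.cast_one]
  linear_combination (↑a + 1) * algebraMap R _ c * algebraMap R _ d * hT' -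
    (↑b + 1) * algebraMap R _ c * algebraMap R _ d * hT

theorem derivation_lie_eq_zero_of_intCast_eq {D E : Derivation R R[T;T⁻¹] R[T;T⁻¹]} {a b : ℤ}
    {c d : R} (hD : D (T 1) = c • T (a + 1)) (hE : E (T 1) = d • T (b + 1)) (hab : (a : R) = b) :
    ⁅D, E⁆ = 0 :=
  derivation_ext_T_one <| by
    rw [derivation_lie_apply_T_one hD hE, hab, sub_self, zero_mul, zero_mul, zero_smul,
      Derivation.zero_apply]

end LaurentPolynomial

theorem mem_U1comp_iff {D : U1 K} {a : ℤ} : D ∈ U1comp K a ↔ ∃ c : K, D (T 1) = c • T (a + 1) :=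
  Submodule.mem_span_singleton.trans <| exists_congr fun _ => eq_comm

/-- Lemma 3.1 restated: the polynomials `⁅x_1^a, x_2^b⁆`, with `a ≡ b (mod 2)`, are
ℤ-graded identities of `U_1` in characteristic two. -/
theorem sameParity_bracket_mem_TU1 [CharP K 2] (a b : ℤ) (hab : a ≡ b [ZMOD 2]) :
    ⁅FreeLieAlgebra.of K (a, 1), FreeLieAlgebra.of K (b, 2)⁆ ∈ TU1 K := by
  intro v hv
  obtain ⟨c, hc⟩ := (mem_U1comp_iff K).1 (hv a 1)
  obtain ⟨d, hd⟩ := (mem_U1comp_iff K).1 (hv b 2)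
  rw [LieHom.map_lie, lift_of_apply, lift_of_apply]
  exact derivation_lie_eq_zero_of_intCast_eq hc hd ((CharP.intCast_eq_intCast K 2).2 hab)
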